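/- arXiv:2104.10668 — 4 statements merged into one kernel-verified Lean document; each statement's English description precedes it below -/
import Mathlib

section
/- For any n×n matrix M over ℤ/2ℤ, there exists a diagonal matrix D over ℤ/2ℤ such that M + D is invertible (equivalently, one can change the entries on the main diagonal of M to make it non-degenerate). -/
lemma det_update_corner {R : Type*} [CommRing R] {n : ℕ}
    (N : Matrix (Fin (n+1)) (Fin (n+1)) R) (t : R) :
    Matrix.det (N.updateRow 0 (N 0 + Pi.single 0 t)) =
      N.det + t * (N.submatrix Fin.succ Fin.succ).det := by
  rw [Matrix.det_updateRow_add, Matrix.updateRow_eq_self]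
  congr 1
  rw [Matrix.det_succ_row_zero]
  rw [Fintype.sum_eq_single 0]
  · simp [Matrix.submatrix, Matrix.updateRow_apply, Fin.succ_ne_zero]
  · intro j hj
    simp [Matrix.updateRow_apply, Pi.single_apply, hj.symm]

lemma aux_det : ∀ (n : ℕ) (M : Matrix (Fin n) (Fin n) (ZMod 2)),
    ∃ d : Fin n → ZMod 2, (M + Matrix.diagonal d).det = 1 := by
  intro n
  induction n with
  | zero => intro M; exact ⟨0, Matrix.det_fin_zero⟩
  | succ n ih =>
    intro M
    obtain ⟨d', hd'⟩ := ih (M.submatrix Fin.succ Fin.succ)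
    set N0 := M + Matrix.diagonal (Fin.cons 0 d') with hN0
    have hsub : N0.submatrix Fin.succ Fin.succ =
        M.submatrix Fin.succ Fin.succ + Matrix.diagonal d' := by
      ext i j
      by_cases h : i = j <;>
        simp [hN0, Matrix.diagonal, Matrix.submatrix, h, Fin.succ_inj]
    set t := 1 + N0.det with ht
    refine ⟨Fin.cons t d', ?_⟩
    have hcons : ∀ i : Fin (n+1), i ≠ 0 →
        (Fin.cons t d' : Fin (n+1) → ZMod 2) i = (Fin.cons 0 d' : Fin (n+1) → ZMod 2) i := by
      intro i hi
      obtain ⟨k, rfl⟩ := Fin.exists_succ_eq.2 hi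
      simp
    have hEq : M + Matrix.diagonal (Fin.cons t d') =
        N0.updateRow 0 (N0 0 + (Pi.single 0 t : Fin (n+1) → ZMod 2)) := by
      ext i j
      rcases eq_or_ne i 0 with rfl | hi
      · rcases eq_or_ne j 0 with rfl | hj
        · simp [hN0, Pi.single_apply, Matrix.diagonal]
        · simp [hN0, Pi.single_apply, hj.symm, Matrix.diagonal, Ne.symm hj]
      · simp only [Matrix.updateRow_ne hi, hN0, Matrix.add_apply]
        congr 1
        by_cases h : i = j
        · subst h; simp [Matrix.diagonal_apply_eq, hcons i hi]
        · simp [Matrix.diagonal_apply_ne _ h]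
    rw [hEq, det_update_corner, hsub, hd', ht]
    ring_nf
    rw [show (2 : ZMod 2) = 0 from rfl]
    ring

theorem exists_diag_add_isUnit {n : ℕ} (M : Matrix (Fin n) (Fin n) (ZMod 2)) :
    ∃ D : Matrix (Fin n) (Fin n) (ZMod 2), D.IsDiag ∧ IsUnit (M + D) := by
  obtain ⟨d, hd⟩ := aux_det n M
  exact ⟨Matrix.diagonal d, Matrix.isDiag_diagonal d, by
    rw [Matrix.isUnit_iff_isUnit_det, hd]; exact isUnit_one⟩
end

section
/- Let M and D be n×n matrices over ℤ/2ℤ such that M is invertible and D is diagonal. Then rank(M + D) ≥ rank(M + I)/2, where I is the identity matrix. -/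
lemma matrix_rank_add_le {n : ℕ} (A B : Matrix (Fin n) (Fin n) (ZMod 2)) :
    (A + B).rank ≤ A.rank + B.rank := by
  rw [Matrix.rank, Matrix.rank, Matrix.rank]
  have h : LinearMap.range (A + B).mulVecLin ≤
      LinearMap.range A.mulVecLin ⊔ LinearMap.range B.mulVecLin := by
    rintro x ⟨v, rfl⟩
    exact Submodule.mem_sup.2 ⟨A.mulVecLin v, ⟨v, rfl⟩, B.mulVecLin v, ⟨v, rfl⟩, by
      simp [Matrix.mulVecLin_apply, Matrix.add_mulVec]⟩
  exact le_trans (Submodule.finrank_mono h)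
    (Submodule.finrank_add_le_finrank_add_finrank _ _)

theorem two_mul_rank_add_diag_ge {n : ℕ} (M D : Matrix (Fin n) (Fin n) (ZMod 2))
    (hM : IsUnit M) (hD : D.IsDiag) :
    2 * (M + D).rank ≥ (M + 1).rank := by
  have hDD : D * D = D := by
    have hsq : ∀ x : ZMod 2, x * x = x := by decide
    rw [← hD.diagonal_diag, Matrix.diagonal_mul_diagonal]
    exact congrArg _ (funext fun i => hsq _)
  have hDzero : (D + 1) * D = 0 := by
    rw [add_mul, hDD, one_mul]
    ext i j
    simp [CharTwo.add_self_eq_zero]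
  have key : (D + 1) * (M + D) = (D + 1) * M := by
    rw [mul_add, hDzero, add_zero]
  have hMdet : IsUnit M.det := (Matrix.isUnit_iff_isUnit_det M).mp hM
  have h1 : (D + 1).rank ≤ (M + D).rank := by
    calc (D + 1).rank = ((D + 1) * M).rank :=
          (Matrix.rank_mul_eq_left_of_isUnit_det M (D + 1) hMdet).symm
      _ = ((D + 1) * (M + D)).rank := by rw [key]
      _ ≤ (M + D).rank := Matrix.rank_mul_le_right _ _
  have h2 : (M + D) + (D + 1) = M + 1 := by
    have hdd : D + D = 0 := by ext i j; simp [CharTwo.add_self_eq_zero]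
    rw [add_assoc, ← add_assoc D D 1, hdd, zero_add]
  calc (M + 1).rank = ((M + D) + (D + 1)).rank := by rw [h2]
    _ ≤ (M + D).rank + (D + 1).rank := matrix_rank_add_le _ _
    _ ≤ (M + D).rank + (M + D).rank := by omega
    _ = 2 * (M + D).rank := by ring
end

section
/- Let M be an invertible n×n matrix over ℤ/2ℤ and let R(M) denote the minimal rank of M + D over all diagonal matrices D over ℤ/2ℤ. Then rank(M + I)/2 ≤ R(M) ≤ rank(M + I). -/
noncomputable def minDiagRank {n : ℕ} (M : Matrix (Fin n) (Fin n) (ZMod 2)) : ℕ :=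
  sInf {r | ∃ D : Matrix (Fin n) (Fin n) (ZMod 2), D.IsDiag ∧ (M + D).rank = r}

/-!
Over `ℤ/2ℤ` every diagonal matrix `D` is idempotent and `M + D = M - D`. For an invertible `M`
and any idempotent `P` over a field, `M - 1 = (M - P) + (P - 1)` and `M = (M - P) + P`, so by
subadditivity of rank
`rank (M - 1) + n ≤ 2 rank (M - P) + rank P + rank (P - 1) ≤ 2 rank (M - P) + n`,
the last step because `P (P - 1) = 0`.
-/

namespace Matrix

variable {m n K : Type*}

theorem rank_add_le [Finite m] [Fintype n] [Field K] (A B : Matrix m n K) :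
    (A + B).rank ≤ A.rank + B.rank := by
  have : Fintype m := Fintype.ofFinite m
  calc (A + B).rank
      ≤ Module.finrank K ↥(LinearMap.range A.mulVecLin ⊔ LinearMap.range B.mulVecLin) := by
        rw [rank, mulVecLin_add]
        exact Submodule.finrank_mono (LinearMap.range_add_le _ _)
    _ ≤ A.rank + B.rank := Submodule.finrank_add_le_finrank_add_finrank _ _

theorem sub_eq_add_of_charTwo {R : Type*} [Ring R] [CharP R 2] (A B : Matrix m n R) :
    A - B = A + B := by
  ext i j
  exact CharTwo.sub_eq_add _ _

theorem IsDiag.isIdempotentElem_of_zmod_two [Fintype n] [DecidableEq n]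
    {D : Matrix n n (ZMod 2)} (hD : D.IsDiag) : IsIdempotentElem D := by
  have hmul_self : ∀ x : ZMod 2, x * x = x := by decide
  rw [← hD.diagonal_diag, IsIdempotentElem, diagonal_mul_diagonal]
  simp only [hmul_self]

theorem rank_sub_one_le_two_mul_rank_sub [Fintype n] [DecidableEq n] [Field K]
    {M P : Matrix n n K} (hM : IsUnit M) (hP : IsIdempotentElem P) :
    (M - 1).rank ≤ 2 * (M - P).rank := by
  have h_one : (M - 1).rank ≤ (M - P).rank + (P - 1).rank := by
    simpa using rank_add_le (M - P) (P - 1)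
  have h_card : Fintype.card n ≤ (M - P).rank + P.rank := by
    simpa [rank_of_isUnit M hM] using rank_add_le (M - P) P
  have h_compl : P.rank + (P - 1).rank ≤ Fintype.card n :=
    rank_add_rank_le_card_of_mul_eq_zero (by rw [mul_sub, mul_one, hP.eq, sub_self])
  omega

end Matrix

open Matrix

theorem minDiagRank_le {n : ℕ} (M : Matrix (Fin n) (Fin n) (ZMod 2))
    {D : Matrix (Fin n) (Fin n) (ZMod 2)} (hD : D.IsDiag) : minDiagRank M ≤ (M + D).rank :=
  Nat.sInf_le ⟨D, hD, rfl⟩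

theorem exists_isDiag_rank_add_eq_minDiagRank {n : ℕ} (M : Matrix (Fin n) (Fin n) (ZMod 2)) :
    ∃ D : Matrix (Fin n) (Fin n) (ZMod 2), D.IsDiag ∧ (M + D).rank = minDiagRank M :=
  Nat.sInf_mem (s := {r | ∃ D : Matrix (Fin n) (Fin n) (ZMod 2), D.IsDiag ∧ (M + D).rank = r})
    ⟨_, 0, isDiag_zero, rfl⟩

theorem minDiagRank_bounds_of_isUnit {n : ℕ} (M : Matrix (Fin n) (Fin n) (ZMod 2))
    (hM : IsUnit M) :
    (M + 1).rank ≤ 2 * minDiagRank M ∧ minDiagRank M ≤ (M + 1).rank := by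
  refine ⟨?_, minDiagRank_le M isDiag_one⟩
  obtain ⟨D, hD, hDrank⟩ := exists_isDiag_rank_add_eq_minDiagRank M
  rw [← hDrank, ← sub_eq_add_of_charTwo, ← sub_eq_add_of_charTwo]
  exact rank_sub_one_le_two_mul_rank_sub hM hD.isIdempotentElem_of_zmod_two
end

section
/- For n×n matrices over ℤ/2ℤ, define R(M) = min over diagonal D of rank(M + D). If M' is any invertible matrix agreeing with M off the diagonal and k = rank(M' + I), then R(M) = R(M') and R(M) ≤ k ≤ 2·R(M). -/
open Matrix

lemma aux_rank_add_le {n : ℕ} {K : Type*} [Field K] (A B : Matrix (Fin n) (Fin n) K) :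
    (A + B).rank ≤ A.rank + B.rank := by
  have hr : LinearMap.range (A + B).mulVecLin ≤
      LinearMap.range A.mulVecLin ⊔ LinearMap.range B.mulVecLin := by
    rintro x ⟨v, rfl⟩
    rw [Matrix.mulVecLin_add]
    exact Submodule.add_mem_sup ⟨v, rfl⟩ ⟨v, rfl⟩
  calc (A + B).rank
      ≤ Module.finrank K ↥(LinearMap.range A.mulVecLin ⊔ LinearMap.range B.mulVecLin) :=
        Submodule.finrank_mono hr
    _ ≤ A.rank + B.rank := Submodule.finrank_add_le_finrank_add_finrank _ _

lemma aux_diag_rank_compl' {n : ℕ} (d : Fin n → ZMod 2) :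
    (diagonal d).rank + (diagonal d + 1).rank = n := by
  have e1 : diagonal d + 1 = diagonal (fun i => d i + 1) := by
    rw [← Matrix.diagonal_one, Matrix.diagonal_add]
  rw [e1, Matrix.rank_diagonal, Matrix.rank_diagonal]
  have h : ∀ i, (d i + 1 ≠ 0) ↔ ¬ (d i ≠ 0) := by
    intro i
    have h2 : ∀ x : ZMod 2, (x + 1 ≠ 0) ↔ ¬(x ≠ 0) := by decide
    exact h2 (d i)
  rw [Fintype.card_congr (Equiv.subtypeEquivRight h)]
  have h1 := Fintype.card_subtype_compl (p := fun i : Fin n => d i ≠ 0)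
  have h2 : Fintype.card {i : Fin n // d i ≠ 0} ≤ Fintype.card (Fin n) :=
    Fintype.card_subtype_le _
  simp only [Fintype.card_fin] at *
  omega

lemma aux_diag_rank_compl {n : ℕ} (D : Matrix (Fin n) (Fin n) (ZMod 2)) (hD : D.IsDiag) :
    D.rank + (D + 1).rank = n := by
  have := aux_diag_rank_compl' D.diag
  rwa [hD.diagonal_diag] at this

lemma aux_add_self {n : ℕ} (A : Matrix (Fin n) (Fin n) (ZMod 2)) : A + A = 0 := by
  ext i j
  simp only [Matrix.add_apply, Matrix.zero_apply]
  have : ∀ x : ZMod 2, x + x = 0 := by decide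
  exact this _

lemma aux_set_eq {n : ℕ} (M M' : Matrix (Fin n) (Fin n) (ZMod 2))
    (hoff : ∀ i j, i ≠ j → M' i j = M i j) :
    {r | ∃ D : Matrix (Fin n) (Fin n) (ZMod 2), D.IsDiag ∧ (M + D).rank = r} =
    {r | ∃ D : Matrix (Fin n) (Fin n) (ZMod 2), D.IsDiag ∧ (M' + D).rank = r} := by
  have hE : (M + M').IsDiag := by
    intro i j hij
    rw [Matrix.add_apply, hoff i j hij]
    have : ∀ x : ZMod 2, x + x = 0 := by decide
    exact this _
  ext r
  constructor
  · rintro ⟨D, hD, rfl⟩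
    refine ⟨D + (M + M'), hD.add hE, ?_⟩
    congr 1
    have := aux_add_self M'
    ext i j
    simp only [Matrix.add_apply, Matrix.zero_apply]
    have h2 : ∀ x y z : ZMod 2, x + y + z + x = y + z := by decide
    rw [show M' i j + (D i j + (M i j + M' i j)) = M' i j + D i j + M i j + M' i j by ring]
    rw [h2]
    exact add_comm _ _
  · rintro ⟨D, hD, rfl⟩
    refine ⟨D + (M + M'), hD.add hE, ?_⟩
    congr 1
    ext i j
    simp only [Matrix.add_apply]
    have h2 : ∀ x y z : ZMod 2, x + (y + (x + z)) = z + y := by decide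
    exact h2 _ _ _

lemma aux_key {n : ℕ} (M' : Matrix (Fin n) (Fin n) (ZMod 2)) (hM' : IsUnit M')
    (D : Matrix (Fin n) (Fin n) (ZMod 2)) (hD : D.IsDiag) :
    (M' + 1).rank ≤ 2 * (M' + D).rank := by
  have hrM' : M'.rank = n := by
    rw [Matrix.rank_of_isUnit M' hM', Fintype.card_fin]
  -- M' = (M' + D) + D
  have e1 : M' = (M' + D) + D := by
    rw [add_assoc, aux_add_self, add_zero]
  -- M' + 1 = (M' + D) + (D + 1)
  have e2 : M' + 1 = (M' + D) + (D + 1) := by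
    rw [← add_assoc, add_assoc M' D D, aux_add_self, add_zero]
  have h1 : n ≤ (M' + D).rank + D.rank := by
    have h := aux_rank_add_le (M' + D) D
    rw [← e1] at h
    omega
  have h2 : (M' + 1).rank ≤ (M' + D).rank + (D + 1).rank := by
    have h := aux_rank_add_le (M' + D) (D + 1)
    rw [← e2] at h
    exact h
  have h3 := aux_diag_rank_compl D hD
  omega

theorem minDiagRank_approx {n : ℕ} (M M' : Matrix (Fin n) (Fin n) (ZMod 2))
    (hM' : IsUnit M') (hoff : ∀ i j, i ≠ j → M' i j = M i j)
    (k : ℕ) (hk : k = (M' + 1).rank) :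
    minDiagRank M = minDiagRank M' ∧ minDiagRank M ≤ k ∧ k ≤ 2 * minDiagRank M := by
  have hset := aux_set_eq M M' hoff
  have heq : minDiagRank M = minDiagRank M' := by
    unfold minDiagRank
    rw [hset]
  refine ⟨heq, ?_, ?_⟩
  · rw [heq]
    apply Nat.sInf_le
    exact ⟨1, Matrix.isDiag_one, hk.symm⟩
  · rw [heq]
    have hne : {r | ∃ D : Matrix (Fin n) (Fin n) (ZMod 2), D.IsDiag ∧ (M' + D).rank = r}.Nonempty :=
      ⟨(M' + 0).rank, 0, Matrix.isDiag_zero, rfl⟩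
    obtain ⟨D, hD, hDr⟩ := Nat.sInf_mem hne
    rw [minDiagRank, ← hDr, hk]
    exact aux_key M' hM' D hD
end
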